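/- Fix β > 0 and c > 0 with β⁴ > c, set γ := √(β² − √c), ψ(x) := β² − x², and let a ∈ (γ, β) be the unique number with ∫₀^a dξ/ψ(ξ)² = a/c. Define u(x) := 2 ∫ₓ^a ( ∫_y^a (ψ(ξ)² − c)/ψ(ξ)² dξ ) dy for x ∈ [0, a]. Then: (i) u satisfies (ψ(x)²/2) u''(x) + c − ψ(x)² = 0 for x ∈ (0, a); (ii) u(a) = 0 and u'(a) = 0 (smooth fit); (iii) u'(0) = 0; (iv) u(x) < 0 for all x ∈ [0, a); and (v) c − ψ(x)² > 0 for all x ∈ (a, β). -/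

import Mathlib

/-!
Write `f = (ψ² - c)/ψ²` and `G(y) = ∫_y^a f`, so that `u = 2 ∫_x^a G`, `u' = -2G` and
`u'' = 2f`; the ODE and the smooth fit at `a` are then immediate, and `u'(0) = -2G(0) = 0`
is exactly the defining equation of `a`. For the sign, `f ≥ 0` on `[0, γ]` and `f < 0` on
`(γ, β)`, because for `0 ≤ x < β` we have `ψ(x)² < c` precisely when `x > γ`. Since the
total integral `G(0)` vanishes, every tail `G(y)` with `y ∈ [0, a]` is `≤ 0`, and it is
`< 0` for `y ∈ [γ, a)`; hence `u < 0` on `[0, a)`.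
-/

open Real Set Filter MeasureTheory intervalIntegral

noncomputable section

/-- `ψ(x) = β² - x²`, the dispersion function for the symmetric Bernoulli prior. -/
def psiB (β x : ℝ) : ℝ := β ^ 2 - x ^ 2

/-- The candidate value function
`u(x) = 2 ∫ₓᵃ ( ∫_yᵃ (ψ(ξ)² - c)/ψ(ξ)² dξ ) dy` of the free-boundary problem. -/
def uFun (β c a x : ℝ) : ℝ :=
  2 * ∫ y in x..a, (∫ ξ in y..a, (psiB β ξ ^ 2 - c) / psiB β ξ ^ 2)

open Topology

section IteratedIntegral

variable {E : Type*} [NormedAddCommGroup E] [NormedSpace ℝ E] [CompleteSpace E]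
  {f : ℝ → E} {s : Set ℝ} {a x : ℝ}

theorem hasDerivAt_integral_left_of_continuousOn (hs : IsOpen s) (hsc : s.OrdConnected)
    (hf : ContinuousOn f s) (ha : a ∈ s) (hx : x ∈ s) :
    HasDerivAt (fun y => ∫ t in y..a, f t) (-f x) x :=
  integral_hasDerivAt_left (hf.mono (hsc.uIcc_subset hx ha)).intervalIntegrable
    (hf.stronglyMeasurableAtFilter hs x hx) (hf.continuousAt (hs.mem_nhds hx))

theorem continuousOn_integral_left (hs : IsOpen s) (hsc : s.OrdConnected)
    (hf : ContinuousOn f s) (ha : a ∈ s) : ContinuousOn (fun y => ∫ t in y..a, f t) s :=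
  fun _ hx => (hasDerivAt_integral_left_of_continuousOn hs hsc hf ha hx).continuousAt
    |>.continuousWithinAt

theorem deriv_integral_integral_left (hs : IsOpen s) (hsc : s.OrdConnected)
    (hf : ContinuousOn f s) (ha : a ∈ s) (hx : x ∈ s) :
    deriv (fun x => ∫ y in x..a, ∫ t in y..a, f t) x = -∫ t in x..a, f t :=
  (hasDerivAt_integral_left_of_continuousOn hs hsc
    (continuousOn_integral_left hs hsc hf ha) ha hx).deriv

theorem deriv_deriv_integral_integral_left (hs : IsOpen s) (hsc : s.OrdConnected)
    (hf : ContinuousOn f s) (ha : a ∈ s) (hx : x ∈ s) :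
    deriv (deriv fun x => ∫ y in x..a, ∫ t in y..a, f t) x = f x := by
  have hderiv : deriv (fun x => ∫ y in x..a, ∫ t in y..a, f t) =ᶠ[𝓝 x]
      fun x => -∫ t in x..a, f t :=
    eventually_of_mem (hs.mem_nhds hx) fun _ hy => deriv_integral_integral_left hs hsc hf ha hy
  rw [hderiv.deriv_eq, (hasDerivAt_integral_left_of_continuousOn hs hsc hf ha hx).fun_neg.deriv,
    neg_neg]

end IteratedIntegral

theorem integral_tail_nonpos_of_sign_change {f : ℝ → ℝ} {p m b y : ℝ}
    (hf : IntervalIntegrable f volume p b) (htot : ∫ t in p..b, f t = 0)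
    (hpos : ∀ t ∈ Icc p m, 0 ≤ f t) (hneg : ∀ t ∈ Ioc m b, f t ≤ 0) (hy : y ∈ Icc p b) :
    ∫ t in y..b, f t ≤ 0 := by
  rcases le_or_gt y m with hym | hmy
  · have hpy : IntervalIntegrable f volume p y :=
      hf.mono_set (uIcc_subset_uIcc_left (uIcc_of_le (hy.1.trans hy.2) ▸ hy))
    rw [← integral_interval_sub_left hf hpy, htot, zero_sub, neg_nonpos]
    exact integral_nonneg hy.1 fun t ht => hpos t ⟨ht.1, ht.2.trans hym⟩
  · have := integral_nonneg (μ := volume) hy.2 fun t ht =>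
      neg_nonneg.2 (hneg t ⟨hmy.trans_le ht.1, ht.2⟩)
    rwa [intervalIntegral.integral_neg, neg_nonneg] at this

section Bernoulli

variable {β c a x y ξ : ℝ}

def uIntegrand (β c ξ : ℝ) : ℝ := (psiB β ξ ^ 2 - c) / psiB β ξ ^ 2

theorem uFun_eq_integral_integral (β c a : ℝ) :
    uFun β c a = fun x => 2 * ∫ y in x..a, ∫ ξ in y..a, uIntegrand β c ξ :=
  rfl

theorem psiB_pos (hx : x ∈ Ioo (-β) β) : 0 < psiB β x := by
  unfold psiB
  nlinarith [hx.1, hx.2]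

theorem continuousOn_uIntegrand : ContinuousOn (uIntegrand β c) (Ioo (-β) β) :=
  ContinuousOn.div (by unfold psiB; fun_prop) (by unfold psiB; fun_prop)
    fun _ hx => (pow_pos (psiB_pos hx) 2).ne'

theorem deriv_uFun (ha : a ∈ Ioo (-β) β) (hx : x ∈ Ioo (-β) β) :
    deriv (uFun β c a) x = -2 * ∫ ξ in x..a, uIntegrand β c ξ := by
  rw [uFun_eq_integral_integral, deriv_const_mul_field']
  dsimp only
  rw [deriv_integral_integral_left isOpen_Ioo ordConnected_Ioo continuousOn_uIntegrand ha hx]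
  ring

theorem deriv_deriv_uFun (ha : a ∈ Ioo (-β) β) (hx : x ∈ Ioo (-β) β) :
    deriv (deriv (uFun β c a)) x = 2 * uIntegrand β c x := by
  rw [uFun_eq_integral_integral, deriv_const_mul_field', deriv_const_mul_field']
  dsimp only
  rw [deriv_deriv_integral_integral_left isOpen_Ioo ordConnected_Ioo continuousOn_uIntegrand
    ha hx]

theorem sq_psiB_lt_iff (hcb : c ≤ β ^ 4) (hξ0 : 0 ≤ ξ) (hξβ : ξ ≤ β) :
    psiB β ξ ^ 2 < c ↔ √(β ^ 2 - √c) < ξ := by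
  have hψ : 0 ≤ psiB β ξ := by unfold psiB; nlinarith
  have hsqrt : √c ≤ β ^ 2 := by
    simpa [show β ^ 4 = (β ^ 2) ^ 2 by ring, sqrt_sq (sq_nonneg β)] using sqrt_le_sqrt hcb
  rw [← lt_sqrt hψ, sqrt_lt (by linarith) hξ0, psiB]
  constructor <;> intro h <;> linarith

theorem integral_uIntegrand_zero_eq_zero (hc : c ≠ 0) (ha0 : 0 ≤ a) (haβ : a < β)
    (haeq : ∫ ξ in (0 : ℝ)..a, 1 / psiB β ξ ^ 2 = a / c) :
    ∫ ξ in (0 : ℝ)..a, uIntegrand β c ξ = 0 := by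
  have hψ : ∀ ξ ∈ uIcc 0 a, psiB β ξ ^ 2 ≠ 0 := fun ξ hξ => by
    rw [uIcc_of_le ha0] at hξ
    exact (pow_pos (psiB_pos ⟨by linarith [hξ.1], hξ.2.trans_lt haβ⟩) 2).ne'
  have hint : IntervalIntegrable (fun ξ => 1 / psiB β ξ ^ 2) volume 0 a :=
    (continuousOn_const.div (by unfold psiB; fun_prop) hψ).intervalIntegrable
  calc ∫ ξ in (0 : ℝ)..a, uIntegrand β c ξ
      = ∫ ξ in (0 : ℝ)..a, (1 - c * (1 / psiB β ξ ^ 2)) :=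
        integral_congr fun ξ hξ => by rw [uIntegrand, sub_div, div_self (hψ ξ hξ), mul_one_div]
    _ = a - c * (a / c) := by
        rw [integral_sub intervalIntegrable_const (hint.const_mul c),
          intervalIntegral.integral_const_mul, haeq]
        simp
    _ = 0 := by field_simp; ring

theorem integral_uIntegrand_nonpos (hc : 0 < c) (hcb : c ≤ β ^ 4) (hγa : √(β ^ 2 - √c) < a)
    (haβ : a < β) (haeq : ∫ ξ in (0 : ℝ)..a, 1 / psiB β ξ ^ 2 = a / c) (hy : y ∈ Icc 0 a) :
    ∫ ξ in y..a, uIntegrand β c ξ ≤ 0 := by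
  have ha0 : 0 ≤ a := (sqrt_nonneg _).trans hγa.le
  have hsub : uIcc 0 a ⊆ Ioo (-β) β := fun t ht => by
    rw [uIcc_of_le ha0] at ht; exact ⟨by linarith [ht.1], ht.2.trans_lt haβ⟩
  refine integral_tail_nonpos_of_sign_change (m := √(β ^ 2 - √c))
    (continuousOn_uIntegrand.mono hsub).intervalIntegrable
    (integral_uIntegrand_zero_eq_zero hc.ne' ha0 haβ haeq) (fun t ht => ?_) (fun t ht => ?_) hy
  · have hle := not_lt.1 <| (sq_psiB_lt_iff hcb ht.1 (by linarith [ht.2])).not.2 (not_lt.2 ht.2)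
    exact div_nonneg (sub_nonneg.2 hle) (sq_nonneg _)
  · have hlt := (sq_psiB_lt_iff hcb ((sqrt_nonneg _).trans ht.1.le) (by linarith [ht.2])).2 ht.1
    exact div_nonpos_of_nonpos_of_nonneg (by linarith) (sq_nonneg _)

theorem integral_uIntegrand_neg (hcb : c ≤ β ^ 4) (hγy : √(β ^ 2 - √c) ≤ y) (hya : y < a)
    (haβ : a < β) : ∫ ξ in y..a, uIntegrand β c ξ < 0 := by
  have hy0 : 0 ≤ y := (sqrt_nonneg _).trans hγy
  have hsub : uIcc y a ⊆ Ioo (-β) β := fun t ht => by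
    rw [uIcc_of_le hya.le] at ht; exact ⟨by linarith [ht.1], ht.2.trans_lt haβ⟩
  have hneg : ∀ t ∈ Ioo y a, uIntegrand β c t < 0 := fun t ht => by
    have hlt :=
      (sq_psiB_lt_iff hcb (hy0.trans ht.1.le) (by linarith [ht.2])).2 (hγy.trans_lt ht.1)
    have hψ := psiB_pos (β := β) ⟨by linarith [ht.1, ht.2], ht.2.trans haβ⟩
    exact div_neg_of_neg_of_pos (by linarith) (by positivity)
  have hpos := intervalIntegral_pos_of_pos_on
    (continuousOn_uIntegrand.mono hsub).intervalIntegrable.neg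
    (fun t ht => neg_pos.2 (hneg t ht)) hya
  simpa only [Pi.neg_apply, intervalIntegral.integral_neg, neg_pos] using hpos

theorem uFun_neg (hc : 0 < c) (hcb : c ≤ β ^ 4) (hγa : √(β ^ 2 - √c) < a) (haβ : a < β)
    (haeq : ∫ ξ in (0 : ℝ)..a, 1 / psiB β ξ ^ 2 = a / c) (hx : x ∈ Ico 0 a) :
    uFun β c a x < 0 := by
  set γ := √(β ^ 2 - √c)
  have hγ0 : 0 ≤ γ := sqrt_nonneg _
  have hG : ContinuousOn (fun y => ∫ ξ in y..a, uIntegrand β c ξ) (Icc x a) :=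
    (continuousOn_integral_left isOpen_Ioo ordConnected_Ioo continuousOn_uIntegrand
      ⟨by linarith, haβ⟩).mono fun t ht => ⟨by linarith [ht.1, hx.1], ht.2.trans_lt haβ⟩
  have hm : max x γ < a := max_lt hx.2 hγa
  have hlt := integral_lt_integral_of_continuousOn_of_le_of_exists_lt hx.2 hG continuousOn_const
    (fun y hy => integral_uIntegrand_nonpos hc hcb hγa haβ haeq ⟨hx.1.trans hy.1.le, hy.2⟩)
    ⟨(max x γ + a) / 2, ⟨by linarith [le_max_left x γ], by linarith⟩,
      integral_uIntegrand_neg hcb (by linarith [le_max_right x γ]) (by linarith) haβ⟩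
  rw [intervalIntegral.integral_zero] at hlt
  rw [uFun_eq_integral_integral]
  linarith

end Bernoulli

theorem bernoulli_free_boundary_solution_general
    (β c a : ℝ) (hc : 0 < c) (hcb : c < β ^ 4)
    (ha : a ∈ Set.Ioo (Real.sqrt (β ^ 2 - Real.sqrt c)) β)
    (haeq : (∫ ξ in (0 : ℝ)..a, 1 / psiB β ξ ^ 2) = a / c) :
    (∀ x ∈ Set.Ioo (0 : ℝ) a,
        (psiB β x ^ 2 / 2) * deriv (deriv (uFun β c a)) x + c - psiB β x ^ 2 = 0) ∧
      uFun β c a a = 0 ∧ deriv (uFun β c a) a = 0 ∧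
      deriv (uFun β c a) 0 = 0 ∧
      (∀ x ∈ Set.Ico (0 : ℝ) a, uFun β c a x < 0) ∧
      ∀ x ∈ Set.Ioo a β, 0 < c - psiB β x ^ 2 := by
  obtain ⟨hγa, haβ⟩ := ha
  have ha0 : 0 < a := (sqrt_nonneg _).trans_lt hγa
  have hmem : ∀ x ∈ Icc 0 a, x ∈ Ioo (-β) β := fun x hx =>
    ⟨by linarith [hx.1], hx.2.trans_lt haβ⟩
  have ha_mem := hmem a ⟨ha0.le, le_rfl⟩
  refine ⟨fun x hx => ?_, by simp [uFun], ?_, ?_,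
    fun x hx => uFun_neg hc hcb.le hγa haβ haeq hx, fun x hx => ?_⟩
  · have hψ := psiB_pos (hmem x (Ioo_subset_Icc_self hx))
    rw [deriv_deriv_uFun ha_mem (hmem x (Ioo_subset_Icc_self hx)), uIntegrand]
    field_simp
    ring
  · rw [deriv_uFun ha_mem ha_mem, integral_same, mul_zero]
  · rw [deriv_uFun ha_mem (hmem 0 ⟨le_rfl, ha0.le⟩),
      integral_uIntegrand_zero_eq_zero hc.ne' ha0.le haβ haeq, mul_zero]
  · have := (sq_psiB_lt_iff hcb.le (ha0.trans hx.1).le hx.2.le).2 (hγa.trans hx.1)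
    linarith

/-- Subsection 4.2: with `β⁴ > c > 0`, `γ = √(β² - √c)` and
`a ∈ (γ, β)` the unique point with `∫₀ᵃ ψ⁻² = a/c`, the function `u` satisfies:
(i) `(ψ²/2) u'' + c - ψ² = 0` on `(0,a)`; (ii) `u(a) = 0` and `u'(a) = 0` (smooth fit);
(iii) `u'(0) = 0`; (iv) `u < 0` on `[0,a)`; and (v) `c - ψ² > 0` on `(a,β)`. -/
theorem bernoulli_free_boundary_solution
    (β c a : ℝ) (hβ : 0 < β) (hc : 0 < c) (hcb : c < β ^ 4)
    (ha : a ∈ Set.Ioo (Real.sqrt (β ^ 2 - Real.sqrt c)) β)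
    (haeq : (∫ ξ in (0 : ℝ)..a, 1 / psiB β ξ ^ 2) = a / c) :
    (∀ x ∈ Set.Ioo (0 : ℝ) a,
        (psiB β x ^ 2 / 2) * deriv (deriv (uFun β c a)) x + c - psiB β x ^ 2 = 0) ∧
      uFun β c a a = 0 ∧ deriv (uFun β c a) a = 0 ∧
      deriv (uFun β c a) 0 = 0 ∧
      (∀ x ∈ Set.Ico (0 : ℝ) a, uFun β c a x < 0) ∧
      ∀ x ∈ Set.Ioo a β, 0 < c - psiB β x ^ 2 :=
  bernoulli_free_boundary_solution_general β c a hc hcb ha haeq
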